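/- Under the collapsed uniform measure on the cycle, the set of particle positions is uniformly distributed: let N ≥ 1 and a, b ≥ 0 with a + b ≤ N. Then for every subset A ⊆ ℤ/N with |A| = a, the number of pairs (S, T) of subsets of ℤ/N with |S| = a, |T| = b such that the set of sites carrying a particle in collapse(S,T) equals A is exactly the binomial coefficient C(N, b). -/

import Mathlib

open scoped Classical

/-- A site of the cycle is occupied by a particle, an anti-particle, or is empty. -/
inductive Site where
  | particle : Site
  | anti : Site
  | empty : Site
deriving DecidableEq

instance instFintypeSite : Fintype Site :=
  Fintype.ofList [Site.particle, Site.anti, Site.empty] (fun x => by cases x <;> simp)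

/-- The cyclic interval I = {a, a+1, …, a+k} in ℤ/N. -/
def cInterval (N : ℕ) [NeZero N] (a : ZMod N) (k : ℕ) : Finset (ZMod N) :=
  (Finset.range (k + 1)).image fun j : ℕ => a + (j : ZMod N)

/-- Site `a` carries a particle in the collapse of (S, T): `a ∉ T` and there is a
cyclic interval I = {a, …, a+k}, 0 ≤ k < N, with |I ∩ S| + |I ∩ T| ≥ |I|. -/
def HasParticle (N : ℕ) [NeZero N] (S T : Finset (ZMod N)) (a : ZMod N) : Prop :=
  a ∉ T ∧ ∃ k, k < N ∧
    (cInterval N a k).card ≤ (cInterval N a k ∩ S).card + (cInterval N a k ∩ T).card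

/-- The collapse of (S, T): anti-particles exactly at T, particles at the sites
described by `HasParticle`, every other site empty. -/
noncomputable def collapse (N : ℕ) [NeZero N] (S T : Finset (ZMod N)) : ZMod N → Site :=
  fun a =>
    if a ∈ T then Site.anti
    else if HasParticle N S T a then Site.particle
    else Site.empty

open Finset

namespace CollapseWalk

/-- `n` is a strict future minimum of the walk `F`. -/
def IsBad (F : ℤ → ℤ) (n : ℤ) : Prop := ∀ j, n < j → F n < F j

section Walk

variable {F : ℤ → ℤ} {N s : ℤ}

lemma per_nat (hper : ∀ n, F (n + N) = F n + s) : ∀ (k : ℕ) (n : ℤ), F (n + k * N) = F n + k * s := by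
  intro k
  induction k with
  | zero => simp
  | succ k ih =>
    intro n
    have e : n + ((k : ℤ)+1) * N = (n + k * N) + N := by ring
    push_cast
    rw [e, hper, ih]
    ring

lemma per_int (hper : ∀ n, F (n + N) = F n + s) : ∀ (k : ℤ) (n : ℤ), F (n + k * N) = F n + k * s := by
  intro k
  induction k using Int.induction_on with
  | zero => simp
  | succ k ih =>
    intro n
    have e : n + ((k : ℤ)+1) * N = (n + k * N) + N := by ring
    push_cast
    rw [e, hper, ih]
    ring
  | pred k ih =>
    intro n
    have h := hper (n + (-((k:ℤ)+1)) * N)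
    rw [show n + (-((k : ℤ)+1)) * N + N = n + (-(k : ℤ)) * N by ring, ih] at h
    rw [show n + (-((k:ℤ)+1)) * N = n + (-(k:ℤ) - 1) * N by ring] at h
    have e2 : (-((k:ℤ)+1)) * s = (-(k:ℤ)) * s - s := by ring
    have e3 : (-(k:ℤ) - 1) * s = (-(k:ℤ)) * s - s := by ring
    omega

/-- reduce any `j ≥ c` into the window `[c, c+N)`. -/
lemma window_reduce (hN : 0 < N) {c j : ℤ} (hcj : c ≤ j) :
    ∃ k : ℕ, c ≤ j - k * N ∧ j - k * N < c + N ∧ j = (j - k * N) + k * N := by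
  have h0 : 0 ≤ (j - c) / N := Int.ediv_nonneg (by omega) hN.le
  have hdm : N * ((j - c) / N) + (j - c) % N = j - c := Int.mul_ediv_add_emod (j - c) N
  have h1 : 0 ≤ (j - c) % N := Int.emod_nonneg _ (by omega)
  have h2 : (j - c) % N < N := Int.emod_lt_of_pos _ hN
  have hcomm : (j - c) / N * N = N * ((j - c) / N) := mul_comm _ _
  refine ⟨((j - c) / N).toNat, ?_, ?_, ?_⟩ <;>
  · push_cast [Int.toNat_of_nonneg h0]
    omega

lemma bad_step (hstep : ∀ n, F (n + 1) ≤ F n + 1) {n : ℤ} (h : IsBad F n) : F (n + 1) = F n + 1 := by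
  have h1 := h (n + 1) (by omega)
  have h2 := hstep n
  omega

/-- in every window of length N there is a bad point which moreover minimizes F on the window. -/
lemma exists_bad_window (hper : ∀ n, F (n + N) = F n + s) (hN : 0 < N) (hs : 0 < s) (c : ℤ) :
    ∃ m, c ≤ m ∧ m < c + N ∧ IsBad F m ∧ ∀ j, c ≤ j → j < c + N → F m ≤ F j := by
  classical
  obtain ⟨x, hx, hxmin⟩ := Finset.exists_min_image (Finset.Icc c (c+N-1)) F ⟨c, by simp; omega⟩
  obtain ⟨m, hmK, hmmax⟩ := Finset.exists_max_image
    ((Finset.Icc c (c+N-1)).filter (fun m => F m = F x)) id ⟨x, by simp [hx]⟩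
  rw [Finset.mem_filter, Finset.mem_Icc] at hmK
  obtain ⟨⟨hm1, hm2⟩, hm3⟩ := hmK
  have hmin : ∀ j, c ≤ j → j < c + N → F x ≤ F j := by
    intro j h1 h2
    exact hxmin j (Finset.mem_Icc.mpr ⟨h1, by omega⟩)
  refine ⟨m, hm1, by omega, ?_, fun j h1 h2 => le_trans (le_of_eq hm3) (hmin j h1 h2)⟩
  intro j hj
  rcases lt_or_ge j (c + N) with hjN | hjN
  · have hjc : c ≤ j := by omega
    have h1 := hmin j hjc hjN
    rcases lt_or_eq_of_le h1 with h | h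
    · omega
    · exfalso
      have hjK := hmmax j (Finset.mem_filter.mpr ⟨Finset.mem_Icc.mpr ⟨hjc, by omega⟩, h.symm⟩)
      simp only [id] at hjK
      omega
  · obtain ⟨k, h1, h2, h3⟩ := window_reduce hN (show c ≤ j by omega)
    have hk1 : 1 ≤ (k : ℤ) := by
      rcases Nat.eq_zero_or_pos k with rfl | hk
      · exfalso; push_cast at h2; omega
      · exact_mod_cast hk
    have hpk := per_nat hper k (j - k * N)
    rw [show j - (k:ℤ) * N + (k:ℤ) * N = j by ring] at hpk
    have h4 := hmin _ h1 h2
    have hks : 1 * s ≤ (k : ℤ) * s := mul_le_mul_of_nonneg_right hk1 hs.le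
    omega

lemma bad_add_N (hper : ∀ n, F (n + N) = F n + s) (hs : 0 ≤ s) {n : ℤ} (h : IsBad F n) :
    IsBad F (n + N) := by
  intro j hj
  have h1 : F (j - N + N) = F (j - N) + s := hper _
  rw [show j - N + N = j by ring] at h1
  have h2 := h (j - N) (by omega)
  have h3 := hper n
  omega

lemma bad_of_add_N (hper : ∀ n, F (n + N) = F n + s) {n : ℤ} (h : IsBad F (n + N)) :
    IsBad F n := by
  intro j hj
  have h1 := h (j + N) (by omega)
  rw [hper j, hper n] at h1
  omega


/-- consecutive bad points differ by exactly 1 in F. -/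
lemma next_bad (hstep : ∀ n, F (n + 1) ≤ F n + 1) {i m : ℤ} (hi : IsBad F i) (hm : IsBad F m)
    (him : i < m) (hno : ∀ j, i < j → j < m → ¬ IsBad F j) : F m = F i + 1 := by
  classical
  have hge : F i < F m := hi m him
  by_contra hne
  have h2 : F i + 2 ≤ F m := by omega
  have hstep1 : F (i + 1) = F i + 1 := bad_step hstep hi
  obtain ⟨mx, hmxK, hmxmax⟩ := Finset.exists_max_image
      ((Finset.Icc (i+1) m).filter (fun j => F j ≤ F i + 1)) id
      ⟨i+1, by rw [Finset.mem_filter, Finset.mem_Icc]; exact ⟨⟨le_refl _, by omega⟩, by omega⟩⟩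
  rw [Finset.mem_filter, Finset.mem_Icc] at hmxK
  obtain ⟨⟨hmx1, hmx2⟩, hmx3⟩ := hmxK
  have hmxm : mx < m := by
    rcases lt_or_eq_of_le hmx2 with h | h
    · exact h
    · exfalso; rw [h] at hmx3; omega
  refine hno mx (by omega) hmxm ?_
  intro j hj
  rcases le_or_gt j m with hjm | hjm
  · have hjmem : F i + 1 < F j := by
      by_contra hcon
      have := hmxmax j (Finset.mem_filter.mpr ⟨Finset.mem_Icc.mpr ⟨by omega, hjm⟩, by omega⟩)
      simp only [id] at this
      omega
    omega
  · have := hm j hjm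
    omega

lemma bad_count_aux (hstep : ∀ n, F (n + 1) ≤ F n + 1) :
    ∀ (d : ℕ) (i x : ℤ), x - i = (d : ℤ) → IsBad F i → IsBad F x →
      F x - F i = (((Finset.Ico i x).filter (IsBad F)).card : ℤ) := by
  classical
  intro d
  induction d using Nat.strong_induction_on with
  | _ d ih =>
    intro i x hd hi hx
    rcases eq_or_lt_of_le (show i ≤ x by omega) with rfl | hix
    · simp
    · obtain ⟨i', hK, hmin⟩ := Finset.exists_min_image
        ((Finset.Ioc i x).filter (IsBad F)) id
        ⟨x, Finset.mem_filter.mpr ⟨Finset.mem_Ioc.mpr ⟨hix, le_refl _⟩, hx⟩⟩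
      rw [Finset.mem_filter, Finset.mem_Ioc] at hK
      obtain ⟨⟨hii', hi'x⟩, hi'bad⟩ := hK
      have hno : ∀ j, i < j → j < i' → ¬ IsBad F j := by
        intro j h1 h2 hbad
        have := hmin j (Finset.mem_filter.mpr ⟨Finset.mem_Ioc.mpr ⟨h1, by omega⟩, hbad⟩)
        simp only [id] at this
        omega
      have hF : F i' = F i + 1 := next_bad hstep hi hi'bad hii' hno
      rcases lt_or_eq_of_le hi'x with hlt | heq
      · have hrec := ih (x - i').toNat (by omega) i' x
          (by rw [Int.toNat_of_nonneg (by omega)]) hi'bad hx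
        have hins : (Finset.Ico i x).filter (IsBad F)
            = insert i ((Finset.Ico i' x).filter (IsBad F)) := by
          ext j
          simp only [Finset.mem_filter, Finset.mem_Ico, Finset.mem_insert]
          constructor
          · rintro ⟨⟨h1, h2⟩, h3⟩
            rcases eq_or_lt_of_le h1 with rfl | h1'
            · exact Or.inl rfl
            · refine Or.inr ⟨⟨?_, h2⟩, h3⟩
              by_contra hcon
              exact hno j h1' (by omega) h3
          · rintro (rfl | ⟨⟨h1, h2⟩, h3⟩)
            · exact ⟨⟨le_refl _, hix⟩, hi⟩
            · exact ⟨⟨by omega, h2⟩, h3⟩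
        have hnotmem : i ∉ (Finset.Ico i' x).filter (IsBad F) := by
          simp only [Finset.mem_filter, Finset.mem_Ico]
          rintro ⟨⟨h1, -⟩, -⟩
          omega
        rw [hins, Finset.card_insert_of_notMem hnotmem]
        push_cast
        omega
      · -- i' = x
        rw [heq] at hF hno
        have hone : (Finset.Ico i x).filter (IsBad F) = {i} := by
          ext j
          simp only [Finset.mem_filter, Finset.mem_Ico, Finset.mem_singleton]
          constructor
          · rintro ⟨⟨h1, h2⟩, h3⟩
            rcases eq_or_lt_of_le h1 with rfl | h1'
            · rfl
            · exact absurd h3 (hno j h1' h2)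
          · rintro rfl
            exact ⟨⟨le_refl _, hix⟩, hi⟩
        rw [hone]
        simp
        omega

lemma bad_count (hstep : ∀ n, F (n + 1) ≤ F n + 1) {i x : ℤ} (hi : IsBad F i) (hx : IsBad F x)
    (hix : i ≤ x) : F x - F i = (((Finset.Ico i x).filter (IsBad F)).card : ℤ) :=
  bad_count_aux hstep (x - i).toNat i x (by rw [Int.toNat_of_nonneg (by omega)]) hi hx

lemma claimA (hstep : ∀ n, F (n + 1) ≤ F n + 1) (hper : ∀ n, F (n + N) = F n + s)
    (hN : 0 < N) (hs : 0 < s) {x p : ℤ} (hx : IsBad F x) (hp1 : p ≤ x) (hp2 : x < p + N) :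
    F (x+1) - F p ≤ 2 * (((Finset.Ico p (x+1)).filter (IsBad F)).card : ℤ) - 1 := by
  classical
  obtain ⟨i, hiK, himin⟩ := Finset.exists_min_image
    ((Finset.Icc p x).filter (IsBad F)) id
    ⟨x, Finset.mem_filter.mpr ⟨Finset.mem_Icc.mpr ⟨hp1, le_refl _⟩, hx⟩⟩
  rw [Finset.mem_filter, Finset.mem_Icc] at hiK
  obtain ⟨⟨hpi, hix⟩, hibad⟩ := hiK
  obtain ⟨m, hm1, hm2, hmbad, hmmin⟩ := exists_bad_window hper hN hs p
  have hFip : F i ≤ F p := by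
    rcases le_or_gt m x with hmx | hmx
    · have himm := himin m (Finset.mem_filter.mpr ⟨Finset.mem_Icc.mpr ⟨hm1, hmx⟩, hmbad⟩)
      simp only [id] at himm
      have h1 : F i ≤ F m := by
        rcases eq_or_lt_of_le himm with rfl | h
        · exact le_refl _
        · exact (hibad m h).le
      exact le_trans h1 (hmmin p (le_refl _) (by omega))
    · exfalso
      have h1 := hx m hmx
      have h2 := hmmin x hp1 (by omega)
      omega
  have hstep1 : F (x+1) = F x + 1 := bad_step hstep hx
  have hcnt : F x - F i = (((Finset.Ico i x).filter (IsBad F)).card : ℤ) :=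
    bad_count hstep hibad hx hix
  have hsub : insert x ((Finset.Ico i x).filter (IsBad F)) ⊆ (Finset.Ico p (x+1)).filter (IsBad F) := by
    intro j hj
    rw [Finset.mem_insert] at hj
    rw [Finset.mem_filter, Finset.mem_Ico]
    rcases hj with rfl | hj
    · exact ⟨⟨hp1, by omega⟩, hx⟩
    · rw [Finset.mem_filter, Finset.mem_Ico] at hj
      exact ⟨⟨by omega, by omega⟩, hj.2⟩
  have hcard := Finset.card_le_card hsub
  rw [Finset.card_insert_of_notMem (by simp [Finset.mem_Ico])] at hcard
  have hβpos : 0 < ((Finset.Ico p (x+1)).filter (IsBad F)).card :=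
    Finset.card_pos.mpr ⟨x, Finset.mem_filter.mpr ⟨Finset.mem_Ico.mpr ⟨hp1, by omega⟩, hx⟩⟩
  push_cast at hcard ⊢
  omega

lemma claimB (hstep : ∀ n, F (n + 1) ≤ F n + 1) (hper : ∀ n, F (n + N) = F n + s)
    (hN : 0 < N) (hs : 0 < s) {x : ℤ} (hx : ¬ IsBad F x) :
    ∃ p, x + 1 - N ≤ p ∧ p ≤ x ∧
      2 * (((Finset.Ico p (x+1)).filter (IsBad F)).card : ℤ) ≤ F (x+1) - F p := by
  classical
  obtain ⟨m, hm1, hm2, hmbad, -⟩ := exists_bad_window hper hN hs (x+1-N)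
  have hmx : m ≤ x := by omega
  obtain ⟨i, hiK, himax⟩ := Finset.exists_max_image
    ((Finset.Icc (x+1-N) x).filter (IsBad F)) id
    ⟨m, Finset.mem_filter.mpr ⟨Finset.mem_Icc.mpr ⟨hm1, hmx⟩, hmbad⟩⟩
  rw [Finset.mem_filter, Finset.mem_Icc] at hiK
  obtain ⟨⟨hi1, hi2⟩, hibad⟩ := hiK
  have hilt : i < x := by
    rcases eq_or_lt_of_le hi2 with rfl | h
    · exact absurd hibad hx
    · exact h
  refine ⟨i+1, by omega, by omega, ?_⟩
  have hempty : (Finset.Ico (i+1) (x+1)).filter (IsBad F) = ∅ := by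
    rw [Finset.eq_empty_iff_forall_notMem]
    intro j hj
    rw [Finset.mem_filter, Finset.mem_Ico] at hj
    have := himax j (Finset.mem_filter.mpr ⟨Finset.mem_Icc.mpr ⟨by omega, by omega⟩, hj.2⟩)
    simp only [id] at this
    omega
  rw [hempty]
  have h1 := hibad (x+1) (by omega)
  have h2 : F (i+1) = F i + 1 := bad_step hstep hibad
  simp
  omega

lemma bad_window_count (hstep : ∀ n, F (n + 1) ≤ F n + 1) (hper : ∀ n, F (n + N) = F n + s)
    (hN : 0 < N) (hs : 0 < s) (c : ℤ) :
    ((((Finset.Ico c (c+N)).filter (IsBad F)).card : ℤ)) = s := by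
  classical
  obtain ⟨i0, h1, h2, hbad, -⟩ := exists_bad_window hper hN hs c
  have hbadN : IsBad F (i0 + N) := bad_add_N hper hs.le hbad
  have hcnt : F (i0+N) - F i0 = (((Finset.Ico i0 (i0+N)).filter (IsBad F)).card : ℤ) :=
    bad_count hstep hbad hbadN (by omega)
  have hFs : F (i0 + N) = F i0 + s := hper i0
  have hsplit1 : (Finset.Ico c (c+N)).filter (IsBad F)
      = ((Finset.Ico c i0).filter (IsBad F)) ∪ ((Finset.Ico i0 (c+N)).filter (IsBad F)) := by
    rw [← Finset.filter_union, Finset.Ico_union_Ico_eq_Ico h1 (by omega)]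
  have hsplit2 : (Finset.Ico i0 (i0+N)).filter (IsBad F)
      = ((Finset.Ico i0 (c+N)).filter (IsBad F)) ∪ ((Finset.Ico (c+N) (i0+N)).filter (IsBad F)) := by
    rw [← Finset.filter_union, Finset.Ico_union_Ico_eq_Ico (by omega) (by omega)]
  have hshift : ((Finset.Ico (c+N) (i0+N)).filter (IsBad F))
      = ((Finset.Ico c i0).filter (IsBad F)).image (· + N) := by
    ext j
    simp only [Finset.mem_filter, Finset.mem_Ico, Finset.mem_image]
    constructor
    · rintro ⟨⟨hj1, hj2⟩, hjb⟩
      refine ⟨j - N, ⟨⟨by omega, by omega⟩, ?_⟩, by ring⟩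
      apply bad_of_add_N hper
      rwa [show j - N + N = j by ring]
    · rintro ⟨y, ⟨⟨hy1, hy2⟩, hyb⟩, rfl⟩
      exact ⟨⟨by omega, by omega⟩, bad_add_N hper hs.le hyb⟩
  have hd1 : Disjoint ((Finset.Ico c i0).filter (IsBad F)) ((Finset.Ico i0 (c+N)).filter (IsBad F)) :=
    Finset.disjoint_filter_filter (Finset.Ico_disjoint_Ico_consecutive c i0 (c+N))
  have hd2 : Disjoint ((Finset.Ico i0 (c+N)).filter (IsBad F)) ((Finset.Ico (c+N) (i0+N)).filter (IsBad F)) :=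
    Finset.disjoint_filter_filter (Finset.Ico_disjoint_Ico_consecutive i0 (c+N) (i0+N))
  have hc1 := congrArg Finset.card hsplit1
  have hc2 := congrArg Finset.card hsplit2
  rw [Finset.card_union_of_disjoint hd1] at hc1
  rw [Finset.card_union_of_disjoint hd2] at hc2
  have hc3 : ((Finset.Ico (c+N) (i0+N)).filter (IsBad F)).card
      = ((Finset.Ico c i0).filter (IsBad F)).card := by
    rw [hshift]
    exact Finset.card_image_of_injective _ (add_left_injective N)
  omega

end Walk

end CollapseWalk


namespace CollapseProof

open CollapseWalk

lemma ediv_sub_ediv_pred (a : ℤ) {n : ℤ} (hn : 0 < n) :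
    a / n - (a - 1) / n = if n ∣ a then 1 else 0 := by
  have hq := Int.mul_ediv_add_emod a n
  have hr0 : 0 ≤ a % n := Int.emod_nonneg a (by omega)
  have hrn : a % n < n := Int.emod_lt_of_pos a hn
  have hcomm : n * (a / n) = (a / n) * n := mul_comm _ _
  have e1 : (a / n - 1) * n = (a / n) * n - n := by ring
  rcases eq_or_lt_of_le hr0 with hr | hr
  · have hdvd : n ∣ a := Int.dvd_of_emod_eq_zero hr.symm
    rw [if_pos hdvd]
    have h1 : a - 1 = (n - 1) + (a / n - 1) * n := by omega
    have hz : (n - 1) / n = 0 := Int.ediv_eq_zero_of_lt (by omega) (by omega)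
    rw [h1, Int.add_mul_ediv_right _ _ (show n ≠ 0 by omega), hz]
    omega
  · have hndvd : ¬ n ∣ a := by
      intro h
      rw [Int.emod_eq_zero_of_dvd h] at hr
      omega
    rw [if_neg hndvd]
    have h1 : a - 1 = (a % n - 1) + (a / n) * n := by omega
    have hz : (a % n - 1) / n = 0 := Int.ediv_eq_zero_of_lt (by omega) (by omega)
    rw [h1, Int.add_mul_ediv_right _ _ (show n ≠ 0 by omega), hz]
    omega


variable (N : ℕ) [NeZero N]

/-- signed count of sites in `[0, n)` whose residue lies in `X`. -/
noncomputable def cnt (X : Finset (ZMod N)) (n : ℤ) : ℤ :=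
  ∑ y ∈ X, ((n - (y.val : ℤ) - 1) / N + 1)

lemma hNpos : 0 < (N : ℤ) := by
  have := Nat.pos_of_ne_zero (NeZero.ne N)
  exact_mod_cast this

lemma cast_val_int (x : ZMod N) : (((x.val : ℤ) : ZMod N)) = x := by
  push_cast
  exact ZMod.natCast_rightInverse x

lemma cnt_succ (X : Finset (ZMod N)) (n : ℤ) :
    cnt N X (n + 1) = cnt N X n + (if (n : ZMod N) ∈ X then 1 else 0) := by
  unfold cnt
  have key : ∀ y ∈ X, ((n + 1 - (y.val : ℤ) - 1) / N + 1)
      = ((n - (y.val : ℤ) - 1) / N + 1) + (if y = (n : ZMod N) then (1:ℤ) else 0) := by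
    intro y hy
    have hd := ediv_sub_ediv_pred (n - (y.val : ℤ)) (hNpos N)
    have hiff : ((N:ℤ) ∣ (n - (y.val : ℤ))) ↔ y = (n : ZMod N) := by
      rw [← ZMod.intCast_zmod_eq_zero_iff_dvd]
      push_cast
      rw [sub_eq_zero]
      have hv : ((y.val : ℕ) : ZMod N) = y := ZMod.natCast_rightInverse y
      constructor
      · intro h
        rw [← hv]
        exact h.symm
      · intro h
        exact (hv.trans h).symm
    rw [show n + 1 - (y.val:ℤ) - 1 = n - (y.val:ℤ) by ring]
    by_cases hc : y = (n : ZMod N)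
    · rw [if_pos hc]
      rw [if_pos (hiff.mpr hc)] at hd
      omega
    · rw [if_neg hc]
      rw [if_neg (fun h => hc (hiff.mp h))] at hd
      omega
  rw [Finset.sum_congr rfl key, Finset.sum_add_distrib,
    Finset.sum_ite_eq' X ((n : ZMod N)) (fun _ => (1:ℤ))]

lemma cnt_period (X : Finset (ZMod N)) (n : ℤ) :
    cnt N X (n + N) = cnt N X n + X.card := by
  unfold cnt
  have key : ∀ y ∈ X, ((n + (N:ℤ) - (y.val : ℤ) - 1) / N + 1)
      = ((n - (y.val : ℤ) - 1) / N + 1) + 1 := by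
    intro y hy
    rw [show n + (N:ℤ) - (y.val:ℤ) - 1 = (n - (y.val:ℤ) - 1) + 1 * N by ring,
      Int.add_mul_ediv_right _ _ (show (N:ℤ) ≠ 0 by have := hNpos N; omega)]
  rw [Finset.sum_congr rfl key, Finset.sum_add_distrib]
  simp

lemma cnt_sum (X : Finset (ZMod N)) (p : ℤ) (m : ℕ) :
    cnt N X (p + m) = cnt N X p
      + ∑ j ∈ Finset.range m, (if ((p + j : ℤ) : ZMod N) ∈ X then (1:ℤ) else 0) := by
  induction m with
  | zero => simp
  | succ m ih =>
    rw [show p + ((m+1 : ℕ) : ℤ) = (p + m) + 1 by push_cast; ring, cnt_succ, ih,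
      Finset.sum_range_succ]
    ring

/-- the height function of the pair (S, T). -/
noncomputable def Fw (S T : Finset (ZMod N)) : ℤ → ℤ :=
  fun n => n - cnt N S n - cnt N T n

lemma Fw_step (S T : Finset (ZMod N)) (n : ℤ) : Fw N S T (n+1) ≤ Fw N S T n + 1 := by
  unfold Fw
  rw [cnt_succ, cnt_succ]
  split_ifs <;> omega

lemma Fw_per (S T : Finset (ZMod N)) (n : ℤ) :
    Fw N S T (n + N) = Fw N S T n + ((N:ℤ) - S.card - T.card) := by
  unfold Fw
  rw [cnt_period, cnt_period]
  ring

lemma Fw_diff (S T : Finset (ZMod N)) (n : ℤ) :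
    Fw N S T (n+1) = Fw N S T n + 1 - (if (n : ZMod N) ∈ S then 1 else 0)
      - (if (n : ZMod N) ∈ T then 1 else 0) := by
  unfold Fw
  rw [cnt_succ, cnt_succ]
  ring

lemma Fw_swap (S T : Finset (ZMod N)) : Fw N T S = Fw N S T := by
  funext n
  unfold Fw
  ring

/-- `p` starts a saturated interval. -/
def GoodI (F : ℤ → ℤ) (p : ℤ) : Prop := ∃ k : ℕ, k < N ∧ F (p + k + 1) ≤ F p

lemma goodI_shift {F : ℤ → ℤ} {s : ℤ} (hper : ∀ n, F (n + N) = F n + s) (t : ℤ) (p : ℤ) :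
    GoodI N F (p + t * N) ↔ GoodI N F p := by
  have key : ∀ q : ℤ, F (q + t * N) = F q + t * s := fun q => per_int hper t q
  constructor
  · rintro ⟨k, hk, h⟩
    refine ⟨k, hk, ?_⟩
    have h1 := key (p + k + 1)
    have h2 := key p
    rw [show p + t * N + (k:ℤ) + 1 = (p + k + 1) + t * N by ring, h1, h2] at h
    omega
  · rintro ⟨k, hk, h⟩
    refine ⟨k, hk, ?_⟩
    have h1 := key (p + k + 1)
    have h2 := key p
    rw [show p + t * N + (k:ℤ) + 1 = (p + k + 1) + t * N by ring, h1, h2]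
    omega

lemma goodI_lift {F : ℤ → ℤ} {s : ℤ} (hper : ∀ n, F (n + N) = F n + s)
    {x : ZMod N} {p : ℤ} (hp : ((p : ℤ) : ZMod N) = x) :
    GoodI N F p ↔ GoodI N F (x.val : ℤ) := by
  have hmod : p ≡ (x.val : ℤ) [ZMOD N] := by
    rw [← ZMod.intCast_eq_intCast_iff]
    rw [hp, cast_val_int]
  obtain ⟨t, ht⟩ := hmod.dvd
  have hc : (N:ℤ) * t = t * N := mul_comm _ _
  rw [show ((x.val : ℕ) : ℤ) = p + t * (N:ℤ) by omega]
  exact (goodI_shift N hper t p).symm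

lemma cInterval_inj {a : ZMod N} {k : ℕ} (hk : k < N) :
    Set.InjOn (fun j : ℕ => a + (j : ZMod N)) (Finset.range (k+1)) := by
  intro j1 h1 j2 h2 h
  simp only [Finset.coe_range, Set.mem_Iio] at h1 h2
  have h' : ((j1 : ℕ) : ZMod N) = ((j2 : ℕ) : ZMod N) := by
    have := add_left_cancel h
    exact this
  rw [ZMod.natCast_eq_natCast_iff] at h'
  have e1 : j1 % N = j1 := Nat.mod_eq_of_lt (by omega)
  have e2 : j2 % N = j2 := Nat.mod_eq_of_lt (by omega)
  unfold Nat.ModEq at h'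
  omega

lemma cInterval_card {a : ZMod N} {k : ℕ} (hk : k < N) :
    (cInterval N a k).card = k + 1 := by
  unfold cInterval
  rw [Finset.card_image_of_injOn (cInterval_inj N hk), Finset.card_range]

lemma inter_card (X : Finset (ZMod N)) (a : ZMod N) {k : ℕ} (hk : k < N) (p : ℤ)
    (hp : ((p : ℤ) : ZMod N) = a) :
    ((cInterval N a k ∩ X).card : ℤ) = cnt N X (p + (k+1 : ℕ)) - cnt N X p := by
  have himg : cInterval N a k ∩ X
      = ((Finset.range (k+1)).filter (fun j : ℕ => a + (j : ZMod N) ∈ X)).image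
          (fun j : ℕ => a + (j : ZMod N)) := by
    unfold cInterval
    ext z
    simp only [Finset.mem_inter, Finset.mem_image, Finset.mem_filter]
    constructor
    · rintro ⟨⟨j, hj, rfl⟩, hz⟩
      exact ⟨j, ⟨hj, hz⟩, rfl⟩
    · rintro ⟨j, ⟨hj, hz⟩, rfl⟩
      exact ⟨⟨j, hj, rfl⟩, hz⟩
  rw [himg, Finset.card_image_of_injOn ((cInterval_inj N hk).mono (by
    intro j hj
    simp only [Finset.coe_filter, Set.mem_setOf_eq] at hj
    simp only [Finset.coe_range, Set.mem_Iio]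
    have := hj.1
    simpa using this))]
  rw [cnt_sum, Finset.card_filter]
  have : ∀ j ∈ Finset.range (k+1),
      (if ((p + (j:ℕ) : ℤ) : ZMod N) ∈ X then (1:ℤ) else 0)
        = if a + ((j:ℕ) : ZMod N) ∈ X then (1:ℤ) else 0 := by
    intro j hj
    have : ((p + (j:ℕ) : ℤ) : ZMod N) = a + ((j:ℕ) : ZMod N) := by
      push_cast
      rw [hp]
    rw [this]
  rw [Finset.sum_congr rfl this]
  push_cast
  ring

lemma hasParticle_iff (S T : Finset (ZMod N)) (x : ZMod N) :
    HasParticle N S T x ↔ (x ∉ T ∧ GoodI N (Fw N S T) (x.val : ℤ)) := by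
  have hp : (((x.val : ℤ) : ℤ) : ZMod N) = x := cast_val_int N x
  unfold HasParticle GoodI
  apply and_congr_right
  intro hxT
  constructor
  · rintro ⟨k, hk, hcard⟩
    refine ⟨k, hk, ?_⟩
    have h1 := inter_card N S x hk (x.val : ℤ) hp
    have h2 := inter_card N T x hk (x.val : ℤ) hp
    have h3 := cInterval_card N (a := x) hk
    rw [h3] at hcard
    have hcast : ((k+1 : ℕ) : ℤ) ≤ ((cInterval N x k ∩ S).card : ℤ) + ((cInterval N x k ∩ T).card : ℤ) := by
      exact_mod_cast hcard
    rw [h1, h2] at hcast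
    unfold Fw
    rw [show (x.val : ℤ) + (k:ℤ) + 1 = (x.val : ℤ) + ((k+1 : ℕ) : ℤ) by push_cast; ring]
    push_cast at hcast ⊢
    omega
  · rintro ⟨k, hk, hF⟩
    refine ⟨k, hk, ?_⟩
    have h1 := inter_card N S x hk (x.val : ℤ) hp
    have h2 := inter_card N T x hk (x.val : ℤ) hp
    have h3 := cInterval_card N (a := x) hk
    rw [h3]
    unfold Fw at hF
    rw [show (x.val : ℤ) + (k:ℤ) + 1 = (x.val : ℤ) + ((k+1 : ℕ) : ℤ) by push_cast; ring] at hF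
    have : ((k+1 : ℕ) : ℤ) ≤ ((cInterval N x k ∩ S).card : ℤ) + ((cInterval N x k ∩ T).card : ℤ) := by
      rw [h1, h2]
      push_cast at hF ⊢
      omega
    exact_mod_cast this

section Pair

variable (S T : Finset (ZMod N))

/-- a site is good if a saturated interval starts there. -/
noncomputable def Goodx (x : ZMod N) : Prop := GoodI N (Fw N S T) (x.val : ℤ)

lemma notGoodI_iff_isBad (hST : (S.card : ℤ) + T.card ≤ N) (p : ℤ) :
    ¬ GoodI N (Fw N S T) p ↔ IsBad (Fw N S T) p := by
  set F := Fw N S T with hF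
  have hper : ∀ n, F (n + N) = F n + ((N:ℤ) - S.card - T.card) := Fw_per N S T
  constructor
  · intro hng j hj
    obtain ⟨k, h1, h2, h3⟩ := window_reduce (hNpos N) (show p + 1 ≤ j by omega)
    have hpk := per_nat hper k (j - k * N)
    rw [← h3] at hpk
    have hk' : ∃ k' : ℕ, k' < N ∧ j - (k:ℤ) * N = p + (k' : ℤ) + 1 := by
      refine ⟨(j - k * N - p - 1).toNat, ?_, ?_⟩ <;>
      · push_cast [Int.toNat_of_nonneg (show (0:ℤ) ≤ j - k * N - p - 1 by omega)]
        omega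
    obtain ⟨k', hk'N, hk'e⟩ := hk'
    have hgt : F p < F (j - (k:ℤ) * N) := by
      rcases lt_or_ge (F p) (F (j - (k:ℤ) * N)) with h | h
      · exact h
      · exfalso
        exact hng ⟨k', hk'N, by rw [← hk'e]; omega⟩
    have hks : 0 ≤ (k:ℤ) * ((N:ℤ) - S.card - T.card) :=
      mul_nonneg (by positivity) (by omega)
    omega
  · intro hbad ⟨k, hk, hle⟩
    have := hbad (p + k + 1) (by omega)
    omega

lemma mem_good (hST : (S.card : ℤ) + T.card ≤ N) {x : ZMod N} (hx : x ∈ S ∨ x ∈ T) :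
    Goodx N S T x := by
  refine ⟨0, Nat.pos_of_ne_zero (NeZero.ne N), ?_⟩
  have hd := Fw_diff N S T (x.val : ℤ)
  rw [cast_val_int] at hd
  rw [show (x.val:ℤ) + ((0:ℕ):ℤ) + 1 = (x.val:ℤ) + 1 by push_cast; ring]
  rcases hx with h | h
  · rw [if_pos h] at hd
    split_ifs at hd <;> omega
  · rw [if_pos h] at hd
    split_ifs at hd <;> omega

lemma good_all_of_szero (hs0 : (N:ℤ) - S.card - T.card = 0) (p : ℤ) :
    GoodI N (Fw N S T) p := by
  refine ⟨N - 1, by have := Nat.pos_of_ne_zero (NeZero.ne N); omega, ?_⟩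
  have hper := Fw_per N S T p
  rw [hs0] at hper
  have : p + ((N:ℕ) - 1 : ℕ) + 1 = p + (N:ℤ) := by
    have := Nat.pos_of_ne_zero (NeZero.ne N)
    push_cast [Nat.cast_sub (by omega : 1 ≤ N)]
    ring
  rw [this]
  omega

lemma nobad_of_szero (hs0 : (N:ℤ) - S.card - T.card = 0) (p : ℤ) :
    ¬ IsBad (Fw N S T) p := by
  intro h
  have h1 := h (p + N) (by have := hNpos N; omega)
  have h2 := Fw_per N S T p
  omega

lemma good_card (hST : (S.card : ℤ) + T.card ≤ N) :
    ((Finset.univ.filter (fun x : ZMod N => Goodx N S T x)).card : ℤ)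
      = S.card + T.card := by
  classical
  set F := Fw N S T with hF
  have hper : ∀ n, F (n + N) = F n + ((N:ℤ) - S.card - T.card) := Fw_per N S T
  have hstep : ∀ n, F (n + 1) ≤ F n + 1 := Fw_step N S T
  have hcompl : (Finset.univ.filter (fun x : ZMod N => Goodx N S T x)).card
      + (Finset.univ.filter (fun x : ZMod N => ¬ Goodx N S T x)).card
      = Fintype.card (ZMod N) := by
    rw [← Finset.card_univ]
    exact Finset.card_filter_add_card_filter_not _
  have hcardN : Fintype.card (ZMod N) = N := ZMod.card N
  rcases eq_or_lt_of_le (show (0:ℤ) ≤ (N:ℤ) - S.card - T.card by omega) with hs0 | hs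
  · have : Finset.univ.filter (fun x : ZMod N => ¬ Goodx N S T x) = ∅ := by
      rw [Finset.eq_empty_iff_forall_notMem]
      intro x hx
      rw [Finset.mem_filter] at hx
      exact hx.2 (good_all_of_szero N S T hs0.symm _)
    rw [this] at hcompl
    simp only [Finset.card_empty, Nat.add_zero] at hcompl
    rw [hcompl, hcardN]
    omega
  · have hbadcard : ((Finset.univ.filter (fun x : ZMod N => ¬ Goodx N S T x)).card : ℤ)
        = (N:ℤ) - S.card - T.card := by
      have hwin := bad_window_count hstep hper (hNpos N) hs 0
      rw [zero_add] at hwin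
      rw [← hwin]
      congr 1
      symm
      apply Finset.card_bij (fun (m : ℤ) _ => ((m : ℤ) : ZMod N))
      · intro m hm
        rw [Finset.mem_filter, Finset.mem_Ico] at hm
        rw [Finset.mem_filter]
        refine ⟨Finset.mem_univ _, ?_⟩
        intro hg
        have hlift := goodI_lift N hper (x := ((m : ℤ) : ZMod N)) (p := m) rfl
        rw [← notGoodI_iff_isBad N S T hST] at hm
        exact hm.2 (hlift.mpr hg)
      · intro m1 hm1 m2 hm2 he
        rw [Finset.mem_filter, Finset.mem_Ico] at hm1 hm2
        have h1 : (m1 : ZMod N) = (m2 : ZMod N) := he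
        rw [ZMod.intCast_eq_intCast_iff'] at h1
        rw [Int.emod_eq_of_lt hm1.1.1 hm1.1.2, Int.emod_eq_of_lt hm2.1.1 hm2.1.2] at h1
        exact h1
      · intro x hx
        rw [Finset.mem_filter] at hx
        refine ⟨(x.val : ℤ), ?_, cast_val_int N x⟩
        rw [Finset.mem_filter, Finset.mem_Ico]
        have hvlt : x.val < N := ZMod.val_lt x
        refine ⟨⟨by positivity, by exact_mod_cast hvlt⟩, ?_⟩
        rw [← notGoodI_iff_isBad N S T hST]
        exact hx.2
    omega

lemma pset_eq :
    Finset.univ.filter (fun x : ZMod N => HasParticle N S T x)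
      = (Finset.univ.filter (fun x : ZMod N => Goodx N S T x)) \ T := by
  ext x
  rw [Finset.mem_filter, Finset.mem_sdiff, Finset.mem_filter, hasParticle_iff]
  unfold Goodx
  tauto

lemma psetT_eq :
    Finset.univ.filter (fun x : ZMod N => HasParticle N T S x)
      = (Finset.univ.filter (fun x : ZMod N => Goodx N S T x)) \ S := by
  ext x
  rw [Finset.mem_filter, Finset.mem_sdiff, Finset.mem_filter, hasParticle_iff]
  unfold Goodx
  rw [Fw_swap]
  tauto

lemma pset_card (hST : (S.card : ℤ) + T.card ≤ N) :
    (Finset.univ.filter (fun x : ZMod N => HasParticle N S T x)).card = S.card := by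
  rw [pset_eq]
  have hsub : T ⊆ Finset.univ.filter (fun x : ZMod N => Goodx N S T x) := by
    intro x hx
    rw [Finset.mem_filter]
    exact ⟨Finset.mem_univ _, mem_good N S T hST (Or.inr hx)⟩
  rw [Finset.card_sdiff_of_subset hsub]
  have h1 := good_card N S T hST
  have h2 := Finset.card_le_card hsub
  omega

lemma psetT_card (hST : (S.card : ℤ) + T.card ≤ N) :
    (Finset.univ.filter (fun x : ZMod N => HasParticle N T S x)).card = T.card := by
  rw [psetT_eq]
  have hsub : S ⊆ Finset.univ.filter (fun x : ZMod N => Goodx N S T x) := by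
    intro x hx
    rw [Finset.mem_filter]
    exact ⟨Finset.mem_univ _, mem_good N S T hST (Or.inl hx)⟩
  rw [Finset.card_sdiff_of_subset hsub]
  have h1 := good_card N S T hST
  have h2 := Finset.card_le_card hsub
  omega

end Pair

lemma ico_filter_card (Q : ℤ → Prop) (p0 : ℤ) (K : ℕ) :
    (((Finset.Ico p0 (p0 + (K:ℤ))).filter Q).card : ℤ)
      = ∑ j ∈ Finset.range K, (if Q (p0 + (j:ℤ)) then (1:ℤ) else 0) := by
  classical
  induction K with
  | zero => simp
  | succ K ih =>
    have hsing : Finset.Ico (p0 + (K:ℤ)) (p0 + (K:ℤ) + 1) = {p0 + (K:ℤ)} := by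
      ext j
      simp only [Finset.mem_Ico, Finset.mem_singleton]
      omega
    have hsplit : Finset.Ico p0 (p0 + ((K+1:ℕ):ℤ))
        = Finset.Ico p0 (p0 + (K:ℤ)) ∪ Finset.Ico (p0 + (K:ℤ)) (p0 + (K:ℤ) + 1) := by
      rw [Finset.Ico_union_Ico_eq_Ico (by omega) (by omega)]
      congr 1
      push_cast
      ring
    rw [hsplit, Finset.filter_union, Finset.card_union_of_disjoint
      (Finset.disjoint_filter_filter (Finset.Ico_disjoint_Ico_consecutive _ _ _)),
      hsing, Finset.filter_singleton, Finset.sum_range_succ, ← ih]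
    split_ifs <;> simp

lemma F_telescope (F : ℤ → ℤ) (p0 : ℤ) (K : ℕ) :
    ∑ j ∈ Finset.range K, (F (p0 + (j:ℤ) + 1) - F (p0 + (j:ℤ))) = F (p0 + (K:ℤ)) - F p0 := by
  induction K with
  | zero => simp
  | succ K ih =>
    rw [Finset.sum_range_succ, ih, show p0 + ((K+1:ℕ):ℤ) = p0 + (K:ℤ) + 1 by push_cast; ring]
    ring

section Pair2

variable (S T : Finset (ZMod N))

lemma ptw (hST : (S.card : ℤ) + T.card ≤ N) (m : ℤ) :
    (if (m : ZMod N) ∈ (Finset.univ.filter (fun x : ZMod N => Goodx N S T x)) \ T then (1:ℤ) else 0)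
      + (if (m : ZMod N) ∈ (Finset.univ.filter (fun x : ZMod N => Goodx N S T x)) \ S then (1:ℤ) else 0)
    = 2 * (if GoodI N (Fw N S T) m then (1:ℤ) else 0) - 1 + (Fw N S T (m+1) - Fw N S T m) := by
  classical
  have hd := Fw_diff N S T m
  have hlift : GoodI N (Fw N S T) m ↔ Goodx N S T ((m : ZMod N)) :=
    goodI_lift N (Fw_per N S T) (x := ((m : ZMod N))) (p := m) rfl
  simp only [Finset.mem_sdiff, Finset.mem_filter, Finset.mem_univ, true_and, hlift]
  by_cases hg : Goodx N S T ((m : ZMod N))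
  · by_cases hs : (m : ZMod N) ∈ S <;> by_cases ht : (m : ZMod N) ∈ T <;>
      simp only [hs, ht, hg, if_true, if_false] at hd ⊢ <;> simp <;> omega
  · have hns : (m : ZMod N) ∉ S := fun h => hg (mem_good N S T hST (Or.inl h))
    have hnt : (m : ZMod N) ∉ T := fun h => hg (mem_good N S T hST (Or.inr h))
    simp only [hns, hnt, hg, if_true, if_false] at hd ⊢ <;> simp <;> omega

lemma rev_sum (hST : (S.card : ℤ) + T.card ≤ N) (p : ℤ) {k : ℕ} (hk : k < N) :
    (cnt N ((Finset.univ.filter (fun x : ZMod N => Goodx N S T x)) \ T) (p + 1)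
      - cnt N ((Finset.univ.filter (fun x : ZMod N => Goodx N S T x)) \ T) (p - k))
    + (cnt N ((Finset.univ.filter (fun x : ZMod N => Goodx N S T x)) \ S) (p + 1)
      - cnt N ((Finset.univ.filter (fun x : ZMod N => Goodx N S T x)) \ S) (p - k))
    = ((k:ℤ) + 1)
      - 2 * (((Finset.Ico (p - (k:ℤ)) (p + 1)).filter (IsBad (Fw N S T))).card : ℤ)
      + (Fw N S T (p + 1) - Fw N S T (p - k)) := by
  classical
  set A := (Finset.univ.filter (fun x : ZMod N => Goodx N S T x)) \ T with hA
  set B := (Finset.univ.filter (fun x : ZMod N => Goodx N S T x)) \ S with hB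
  set F := Fw N S T with hF
  have he : p - (k:ℤ) + ((k+1 : ℕ):ℤ) = p + 1 := by push_cast; ring
  have hS1 : cnt N A (p + 1) - cnt N A (p - (k:ℤ))
      = ∑ j ∈ Finset.range (k+1), (if (((p - (k:ℤ) + (j:ℤ)) : ℤ) : ZMod N) ∈ A then (1:ℤ) else 0) := by
    rw [← he, cnt_sum]
    ring
  have hS2 : cnt N B (p + 1) - cnt N B (p - (k:ℤ))
      = ∑ j ∈ Finset.range (k+1), (if (((p - (k:ℤ) + (j:ℤ)) : ℤ) : ZMod N) ∈ B then (1:ℤ) else 0) := by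
    rw [← he, cnt_sum]
    ring
  rw [hS1, hS2, ← Finset.sum_add_distrib]
  have hcongr : ∀ j ∈ Finset.range (k+1),
      ((if (((p - (k:ℤ) + (j:ℤ)) : ℤ) : ZMod N) ∈ A then (1:ℤ) else 0)
        + (if (((p - (k:ℤ) + (j:ℤ)) : ℤ) : ZMod N) ∈ B then (1:ℤ) else 0))
      = 2 * (if GoodI N F (p - (k:ℤ) + (j:ℤ)) then (1:ℤ) else 0) - 1
        + (F ((p - (k:ℤ) + (j:ℤ)) + 1) - F (p - (k:ℤ) + (j:ℤ))) := fun j _ => ptw N S T hST _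
  rw [Finset.sum_congr rfl hcongr]
  have hgb : ∀ j ∈ Finset.range (k+1),
      (2 * (if GoodI N F (p - (k:ℤ) + (j:ℤ)) then (1:ℤ) else 0) - 1
        + (F ((p - (k:ℤ) + (j:ℤ)) + 1) - F (p - (k:ℤ) + (j:ℤ))))
      = 2 * (1 - (if IsBad F (p - (k:ℤ) + (j:ℤ)) then (1:ℤ) else 0)) - 1
        + (F ((p - (k:ℤ) + (j:ℤ)) + 1) - F (p - (k:ℤ) + (j:ℤ))) := by
    intro j _
    have hiff := notGoodI_iff_isBad N S T hST (p - (k:ℤ) + (j:ℤ))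
    by_cases hq : GoodI N F (p - (k:ℤ) + (j:ℤ))
    · rw [if_pos hq, if_neg (fun hb => (hiff.mpr hb) hq)]
      ring
    · rw [if_neg hq, if_pos (hiff.mp hq)]
      ring
  rw [Finset.sum_congr rfl hgb]
  have hbadsum : ∑ j ∈ Finset.range (k+1), (if IsBad F (p - (k:ℤ) + (j:ℤ)) then (1:ℤ) else 0)
      = (((Finset.Ico (p - (k:ℤ)) (p + 1)).filter (IsBad F)).card : ℤ) := by
    rw [← he]
    exact (ico_filter_card (IsBad F) (p - (k:ℤ)) (k+1)).symm
  have htel : ∑ j ∈ Finset.range (k+1), (F ((p - (k:ℤ) + (j:ℤ)) + 1) - F (p - (k:ℤ) + (j:ℤ)))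
      = F (p + 1) - F (p - (k:ℤ)) := by
    rw [← he]
    exact F_telescope F (p - (k:ℤ)) (k+1)
  have hsplit : ∑ j ∈ Finset.range (k+1),
      (2 * (1 - (if IsBad F (p - (k:ℤ) + (j:ℤ)) then (1:ℤ) else 0)) - 1
        + (F ((p - (k:ℤ) + (j:ℤ)) + 1) - F (p - (k:ℤ) + (j:ℤ))))
      = ∑ j ∈ Finset.range (k+1), (1 - 2 * (if IsBad F (p - (k:ℤ) + (j:ℤ)) then (1:ℤ) else 0))
        + ∑ j ∈ Finset.range (k+1), (F ((p - (k:ℤ) + (j:ℤ)) + 1) - F (p - (k:ℤ) + (j:ℤ))) := by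
    rw [← Finset.sum_add_distrib]
    apply Finset.sum_congr rfl
    intro j _
    ring
  rw [hsplit, htel, Finset.sum_sub_distrib, Finset.sum_const, ← Finset.mul_sum, hbadsum]
  simp only [Finset.card_range, nsmul_eq_mul, mul_one]
  push_cast
  ring

end Pair2

/-- the reverse saturation condition, expressed through counting functions of A and B. -/
def RevCond (A B : Finset (ZMod N)) (x : ZMod N) : Prop :=
  ∃ k : ℕ, k < N ∧ ((k:ℤ) + 1) ≤
    (cnt N A ((x.val:ℤ) + 1) - cnt N A ((x.val:ℤ) - (k:ℤ)))
      + (cnt N B ((x.val:ℤ) + 1) - cnt N B ((x.val:ℤ) - (k:ℤ)))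

/-- recover the pair (S, T) from the pair of collapsed particle sets. -/
noncomputable def recover (A B : Finset (ZMod N)) : Finset (ZMod N) × Finset (ZMod N) :=
  (Finset.univ.filter (fun x => x ∉ B ∧ RevCond N A B x),
   Finset.univ.filter (fun x => x ∉ A ∧ RevCond N A B x))

section Pair3

variable (S T : Finset (ZMod N))

lemma revCond_iff (hST : (S.card : ℤ) + T.card ≤ N) (x : ZMod N) :
    RevCond N ((Finset.univ.filter (fun y : ZMod N => Goodx N S T y)) \ T)
      ((Finset.univ.filter (fun y : ZMod N => Goodx N S T y)) \ S) x
    ↔ Goodx N S T x := by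
  classical
  have hper : ∀ n, Fw N S T (n + N) = Fw N S T n + ((N:ℤ) - S.card - T.card) := Fw_per N S T
  have hstep : ∀ n, Fw N S T (n + 1) ≤ Fw N S T n + 1 := Fw_step N S T
  have hN1 : 1 ≤ N := Nat.pos_of_ne_zero (NeZero.ne N)
  rcases eq_or_lt_of_le (show (0:ℤ) ≤ (N:ℤ) - S.card - T.card by omega) with hs0 | hs
  · -- s = 0 : both sides always true
    constructor
    · intro _
      exact good_all_of_szero N S T hs0.symm _
    · intro _
      refine ⟨N - 1, by omega, ?_⟩
      have hrs := rev_sum N S T hST (x.val : ℤ) (show N - 1 < N by omega)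
      have hemp : (Finset.Ico ((x.val:ℤ) - ((N-1:ℕ):ℤ)) ((x.val:ℤ) + 1)).filter
          (IsBad (Fw N S T)) = ∅ := by
        rw [Finset.eq_empty_iff_forall_notMem]
        intro m hm
        rw [Finset.mem_filter] at hm
        exact nobad_of_szero N S T hs0.symm m hm.2
      rw [hemp] at hrs
      have hFeq : Fw N S T ((x.val:ℤ) + 1) - Fw N S T ((x.val:ℤ) - ((N-1:ℕ):ℤ)) = 0 := by
        have := hper ((x.val:ℤ) - ((N-1:ℕ):ℤ))
        rw [← hs0] at this
        rw [show (x.val:ℤ) - ((N-1:ℕ):ℤ) + (N:ℤ) = (x.val:ℤ) + 1 by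
          push_cast [Nat.cast_sub hN1]; ring] at this
        omega
      rw [hrs, hFeq]
      simp only [Finset.card_empty]
      push_cast [Nat.cast_sub hN1]
      ring_nf
      omega
  · -- s > 0
    constructor
    · rintro ⟨k, hk, hle⟩
      by_contra hng
      have hbad : IsBad (Fw N S T) (x.val : ℤ) := (notGoodI_iff_isBad N S T hST _).mp hng
      have hA := claimA hstep hper (hNpos N) hs hbad (show (x.val:ℤ) - k ≤ (x.val:ℤ) by omega)
        (show (x.val:ℤ) < (x.val:ℤ) - k + N by omega)
      have hrs := rev_sum N S T hST (x.val : ℤ) hk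
      omega
    · intro hg
      have hnb : ¬ IsBad (Fw N S T) (x.val : ℤ) :=
        fun hb => ((notGoodI_iff_isBad N S T hST _).mpr hb) hg
      obtain ⟨p', hp1, hp2, hB⟩ := claimB hstep hper (hNpos N) hs hnb
      have hk' : ((x.val:ℤ) - p').toNat < N := by omega
      refine ⟨((x.val:ℤ) - p').toNat, hk', ?_⟩
      have hcast : (((x.val:ℤ) - p').toNat : ℤ) = (x.val:ℤ) - p' :=
        Int.toNat_of_nonneg (by omega)
      have hrs := rev_sum N S T hST (x.val : ℤ) hk'
      rw [hcast] at hrs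
      rw [hcast]
      rw [show (x.val:ℤ) - ((x.val:ℤ) - p') = p' by ring] at hrs ⊢
      omega

lemma recover_eq (hST : (S.card : ℤ) + T.card ≤ N) :
    recover N (Finset.univ.filter (fun x : ZMod N => HasParticle N S T x))
      (Finset.univ.filter (fun x : ZMod N => HasParticle N T S x)) = (S, T) := by
  classical
  rw [pset_eq, psetT_eq]
  unfold recover
  refine Prod.ext ?_ ?_
  · show Finset.univ.filter _ = S
    ext x
    rw [Finset.mem_filter]
    rw [revCond_iff N S T hST x]
    simp only [Finset.mem_univ, true_and, Finset.mem_sdiff, Finset.mem_filter]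
    have hxg : x ∈ S → Goodx N S T x := fun h => mem_good N S T hST (Or.inl h)
    tauto
  · show Finset.univ.filter _ = T
    ext x
    rw [Finset.mem_filter]
    rw [revCond_iff N S T hST x]
    simp only [Finset.mem_univ, true_and, Finset.mem_sdiff, Finset.mem_filter]
    have hxg : x ∈ T → Goodx N S T x := fun h => mem_good N S T hST (Or.inr h)
    tauto

end Pair3

lemma collapse_particle_filter (S T : Finset (ZMod N)) :
    Finset.univ.filter (fun s => collapse N S T s = Site.particle)
      = Finset.univ.filter (fun x => HasParticle N S T x) := by
  ext x
  simp only [Finset.mem_filter, Finset.mem_univ, true_and]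
  unfold collapse
  split_ifs with h1 h2
  · constructor
    · intro h
      exact absurd h (by simp)
    · intro hp
      exact absurd h1 hp.1
  · simp [h2]
  · simp [h2]

lemma all_eq_of_sum_eq {ι : Type*} (s : Finset ι) (f : ι → ℕ) (m : ℕ)
    (hle : ∀ i ∈ s, f i ≤ m) (hsum : ∑ i ∈ s, f i = s.card * m) :
    ∀ i ∈ s, f i = m := by
  intro i hi
  by_contra hne
  have hlt : f i < m := lt_of_le_of_ne (hle i hi) hne
  have hstrict := Finset.sum_lt_sum (fun j hj => hle j hj) ⟨i, hi, hlt⟩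
  rw [Finset.sum_const, smul_eq_mul] at hstrict
  omega

end CollapseProof

/-- Under the collapsed uniform measure on ℤ/N the particle positions are uniform:
for each set A of size a, exactly C(N, b) of the pairs (S, T) with |S| = a,
|T| = b collapse to a configuration whose particle set is A. -/
theorem particle_marginal_uniform (N : ℕ) [NeZero N] (a b : ℕ) (hab : a + b ≤ N)
    (A : Finset (ZMod N)) (hA : A.card = a) :
    Set.ncard {p : Finset (ZMod N) × Finset (ZMod N) |
        p.1.card = a ∧ p.2.card = b ∧
        (Finset.univ.filter fun s => collapse N p.1 p.2 s = Site.particle) = A}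
      = N.choose b := by
  classical
  open CollapseProof in
  have hNcard : (Finset.univ : Finset (ZMod N)).card = N := by
    rw [Finset.card_univ, ZMod.card]
  set Ω := Finset.univ.filter
    (fun p : Finset (ZMod N) × Finset (ZMod N) => p.1.card = a ∧ p.2.card = b) with hΩ
  set pm := fun p : Finset (ZMod N) × Finset (ZMod N) =>
    Finset.univ.filter (fun x => HasParticle N p.1 p.2 x) with hpm
  have hsetEq : {p : Finset (ZMod N) × Finset (ZMod N) |
        p.1.card = a ∧ p.2.card = b ∧
        (Finset.univ.filter fun s => collapse N p.1 p.2 s = Site.particle) = A}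
      = ↑(Ω.filter (fun p => pm p = A)) := by
    ext p
    simp only [Set.mem_setOf_eq, Finset.coe_filter, Finset.mem_filter, Finset.mem_univ,
      true_and, Set.mem_setOf_eq, hΩ, hpm]
    rw [CollapseProof.collapse_particle_filter]
    tauto
  rw [hsetEq, Set.ncard_coe_finset]
  have hSTmem : ∀ p ∈ Ω, ((p.1.card : ℤ) + p.2.card ≤ N) := by
    intro p hp
    rw [hΩ, Finset.mem_filter] at hp
    obtain ⟨-, h1, h2⟩ := hp
    rw [h1, h2]
    push_cast
    omega
  -- each fiber has size at most C(N, b)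
  have hfib_le : ∀ A' : Finset (ZMod N), (Ω.filter (fun p => pm p = A')).card ≤ N.choose b := by
    intro A'
    have hmaps : ∀ p ∈ Ω.filter (fun p => pm p = A'),
        Finset.univ.filter (fun x => HasParticle N p.2 p.1 x)
          ∈ Finset.univ.powersetCard b := by
      intro p hp
      rw [Finset.mem_filter] at hp
      rw [Finset.mem_powersetCard]
      refine ⟨Finset.subset_univ _, ?_⟩
      rw [CollapseProof.psetT_card N p.1 p.2 (hSTmem p hp.1)]
      rw [hΩ, Finset.mem_filter] at hp
      exact hp.1.2.2
    have hinj : Set.InjOn (fun p : Finset (ZMod N) × Finset (ZMod N) =>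
        Finset.univ.filter (fun x => HasParticle N p.2 p.1 x))
        (Ω.filter (fun p => pm p = A')) := by
      intro p hp q hq he
      simp only [Finset.coe_filter, Set.mem_setOf_eq] at hp hq
      have hrp := CollapseProof.recover_eq N p.1 p.2 (hSTmem p hp.1)
      have hrq := CollapseProof.recover_eq N q.1 q.2 (hSTmem q hq.1)
      have hup : pm p = pm q := by rw [hp.2, hq.2]
      have hup2 : Finset.univ.filter (fun x => HasParticle N p.1 p.2 x)
          = Finset.univ.filter (fun x => HasParticle N q.1 q.2 x) := hup
      have he2 : Finset.univ.filter (fun x => HasParticle N p.2 p.1 x)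
          = Finset.univ.filter (fun x => HasParticle N q.2 q.1 x) := he
      rw [hup2, he2, hrq] at hrp
      have h1 : q.1 = p.1 := congrArg Prod.fst hrp
      have h2 : q.2 = p.2 := congrArg Prod.snd hrp
      exact (Prod.ext_iff.mpr ⟨h1, h2⟩).symm
    have := Finset.card_le_card_of_injOn _ hmaps hinj
    rwa [Finset.card_powersetCard, hNcard] at this
  -- fiberwise decomposition
  have hfiber : Ω.card = ∑ A' ∈ Finset.univ.powersetCard a, (Ω.filter (fun p => pm p = A')).card := by
    apply Finset.card_eq_sum_card_fiberwise
    intro p hp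
    rw [Finset.mem_coe] at hp ⊢
    rw [Finset.mem_powersetCard]
    refine ⟨Finset.subset_univ _, ?_⟩
    rw [hpm]
    simp only
    rw [CollapseProof.pset_card N p.1 p.2 (hSTmem p hp)]
    rw [hΩ, Finset.mem_filter] at hp
    exact hp.2.1
  have hΩcard : Ω.card = N.choose a * N.choose b := by
    have hprod : Ω = (Finset.univ.powersetCard a) ×ˢ (Finset.univ.powersetCard b) := by
      ext p
      rw [hΩ, Finset.mem_filter, Finset.mem_product, Finset.mem_powersetCard,
        Finset.mem_powersetCard]
      constructor
      · rintro ⟨-, h1, h2⟩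
        exact ⟨⟨Finset.subset_univ _, h1⟩, ⟨Finset.subset_univ _, h2⟩⟩
      · rintro ⟨⟨-, h1⟩, -, h2⟩
        exact ⟨Finset.mem_univ _, h1, h2⟩
    rw [hprod, Finset.card_product, Finset.card_powersetCard, Finset.card_powersetCard, hNcard]
  have hpows : (Finset.univ.powersetCard a : Finset (Finset (ZMod N))).card = N.choose a := by
    rw [Finset.card_powersetCard, hNcard]
  have hall := CollapseProof.all_eq_of_sum_eq (Finset.univ.powersetCard a)
    (fun A' => (Ω.filter (fun p => pm p = A')).card) (N.choose b)
    (fun A' _ => hfib_le A') (by rw [← hfiber, hΩcard, hpows])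
  exact hall A (Finset.mem_powersetCard.mpr ⟨Finset.subset_univ _, hA⟩)
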